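/- Fix d ≥ 2, 0 < p⋆ ≤ 1/(2(d+1)), and η₁, η₂ ∈ Δ_d, and let P₁, P₂ be the laws of a length-m trajectory under (M_{η₁}, p) and (M_{η₂}, p) respectively. Let N_{d+1}(x) = ∑_{t=1}^m 1{x_t = d+1}. Then for every n with 1 ≤ n and 2n ≤ m + 1: TV( P₁(· | N_{d+1} = n), P₂(· | N_{d+1} = n) ) ≤ TV( η₁^{⊗n}, η₂^{⊗n} ), where η^{⊗n} is the n-fold product distribution on [d]^n. -/

import Mathlib

open Finset

noncomputable section

/-- A row-stochastic matrix. -/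
def IsStochastic {d : ℕ} (M : Matrix (Fin d) (Fin d) ℝ) : Prop :=
  (∀ i j, 0 ≤ M i j) ∧ ∀ i, ∑ j, M i j = 1

/-- A probability distribution on `Fin d`. -/
def IsDist {d : ℕ} (μ : Fin d → ℝ) : Prop :=
  (∀ i, 0 ≤ μ i) ∧ ∑ i, μ i = 1

/-- Probability of a length-`m` trajectory under the Markov chain `(M, μ)`:
`μ(x₁) ∏_{t=1}^{m-1} M(x_t, x_{t+1})`. -/
def trajP {d m : ℕ} (M : Matrix (Fin d) (Fin d) ℝ) (μ : Fin d → ℝ)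
    (x : Fin m → Fin d) : ℝ :=
  (if h : 0 < m then μ (x ⟨0, h⟩) else 1) *
    ∏ t : Fin (m - 1),
      M (x ⟨t.1, by have h2 := t.2; omega⟩) (x ⟨t.1 + 1, by have h2 := t.2; omega⟩)


/-- The distribution `p` on `[d+1]`: `p(d+1) = p⋆`, `p(i) = (1-p⋆)/d` for `i ∈ [d]`. -/
def pInit (d : ℕ) (ps : ℝ) : Fin (d + 1) → ℝ :=
  fun i => if i.1 = d then ps else (1 - ps) / d

/-- The chain `M_η ∈ G_{p⋆}`: rows `1,…,d` equal `p`, row `d+1` is `(η(1),…,η(d),0)`. -/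
def MG (d : ℕ) (ps : ℝ) (η : Fin d → ℝ) : Matrix (Fin (d + 1)) (Fin (d + 1)) ℝ :=
  Matrix.of fun i j =>
    if i.1 = d then (if h : j.1 = d then 0 else η ⟨j.1, by have h2 := j.2; omega⟩)
    else pInit d ps j

/-- Number of visits to state `d+1` in a trajectory. -/
def Nlast (d m : ℕ) (x : Fin m → Fin (d + 1)) : ℕ :=
  (Finset.univ.filter (fun t => (x t).1 = d)).card

open scoped Classical in
/-- The conditional distribution of a length-`m` trajectory of `(M_η, p)` given the
event `E` (with the convention `0/0 = 0`). -/
def condP {d m : ℕ} (ps : ℝ) (η : Fin d → ℝ)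
    (E : (Fin m → Fin (d + 1)) → Prop) (x : Fin m → Fin (d + 1)) : ℝ :=
  (if E x then trajP (MG d ps η) (pInit d ps) x else 0) /
    ∑ y, if E y then trajP (MG d ps η) (pInit d ps) y else 0

/-- Total variation distance between two distributions on a finite set. -/
def tvDist {S : Type*} [Fintype S] (P Q : S → ℝ) : ℝ := (1 / 2) * ∑ x, |P x - Q x|

/-- The `n`-fold product distribution `η^{⊗n}` on `[d]^n`. -/
def prodP {d : ℕ} (η : Fin d → ℝ) (n : ℕ) (x : Fin n → Fin d) : ℝ := ∏ s, η (x s)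

/-!
Under `M_η` the state after a visit to `d+1` is drawn from `η`, every other state from `p`, and
`d+1` is never visited twice in a row. So on the trajectories that can occur,
`P_η(x) = A(x) ∏_{s ∈ S(x)} η(x_s)`, where `S(x)` is the set of times right after a visit to
`d+1` and `A(x)` does not depend on `η`. Exchanging the values of `x` on `S(x)` with those of an
arbitrary `z : [m] → [d]` is an involution preserving `S(x)` and `N_{d+1}`, so averaging over `z`
writes both conditional laws as mixtures, with the same weights, of laws whose `S(x)`-marginals
are `η₁^{⊗|S(x)|}` and `η₂^{⊗|S(x)|}`. Total variation is convex, and it grows with the number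
of factors of a product law, while `|S(x)| ≤ N_{d+1}(x) = n`.
-/

theorem tvDist_nonneg {S : Type*} [Fintype S] (P Q : S → ℝ) : 0 ≤ tvDist P Q := by
  unfold tvDist
  positivity

theorem tvDist_self {S : Type*} [Fintype S] (P : S → ℝ) : tvDist P P = 0 := by
  simp [tvDist]

theorem tvDist_div_const {S : Type*} [Fintype S] (P Q : S → ℝ) (c : ℝ) :
    tvDist (fun x => P x / c) (fun x => Q x / c) = tvDist P Q / |c| := by
  simp only [tvDist, ← sub_div, abs_div, ← sum_div, mul_div_assoc]

theorem tvDist_div_le {S : Type*} [Fintype S] {P Q : S → ℝ} {Z c : ℝ} (hc : 0 ≤ c)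
    (h : tvDist P Q ≤ c * Z) : tvDist (fun x => P x / Z) (fun x => Q x / Z) ≤ c := by
  rw [tvDist_div_const]
  rcases eq_or_ne Z 0 with hZ | hZ
  · simpa [hZ] using hc
  · rw [div_le_iff₀ (abs_pos.mpr hZ)]
    exact h.trans (mul_le_mul_of_nonneg_left (le_abs_self Z) hc)

section ProductDistribution

def prodPi {α : Type*} (η : α → ℝ) (ι : Type*) [Fintype ι] (y : ι → α) : ℝ := ∏ i, η (y i)

theorem prodPi_restrict {α ι : Type*} (S : Finset ι) (η : α → ℝ) (z : ι → α) :
    prodPi η S (S.restrict z) = ∏ i ∈ S, η (z i) :=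
  prod_coe_sort S fun i => η (z i)

variable {α ι κ : Type*} [Fintype α] [Fintype ι] [Fintype κ] [DecidableEq ι] [DecidableEq κ]

theorem sum_prodPi {η : α → ℝ} (hη : ∑ a, η a = 1) : ∑ y, prodPi η ι y = 1 := by
  simp [prodPi, ← Fintype.prod_sum, hη]

theorem tvDist_prodPi_congr (e : ι ≃ κ) (η₁ η₂ : α → ℝ) :
    tvDist (prodPi η₁ ι) (prodPi η₂ ι) = tvDist (prodPi η₁ κ) (prodPi η₂ κ) := by
  unfold tvDist prodPi
  congr 1
  refine Fintype.sum_equiv (e.arrowCongr (Equiv.refl α)) _ _ fun y => ?_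
  simp [← e.prod_comp]

theorem tvDist_prodPi_le_sum {η₁ η₂ : α → ℝ} (hη₁ : ∑ a, η₁ a = 1) (hη₂ : ∑ a, η₂ a = 1) :
    tvDist (prodPi η₁ ι) (prodPi η₂ ι) ≤ tvDist (prodPi η₁ (ι ⊕ κ)) (prodPi η₂ (ι ⊕ κ)) := by
  let e := (Equiv.sumArrowEquivProdArrow ι κ α).symm
  have hsplit : ∀ (η : α → ℝ) y y', prodPi η (ι ⊕ κ) (e (y, y')) = prodPi η ι y * prodPi η κ y' :=
    fun η y y' => by simp [e, prodPi, Fintype.prod_sum_type]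
  unfold tvDist
  gcongr
  rw [← e.sum_comp, Fintype.sum_prod_type]
  refine sum_le_sum fun y _ => ?_
  calc |prodPi η₁ ι y - prodPi η₂ ι y|
      = |∑ y', (prodPi η₁ ι y * prodPi η₁ κ y' - prodPi η₂ ι y * prodPi η₂ κ y')| := by
        rw [sum_sub_distrib, ← mul_sum, ← mul_sum, sum_prodPi hη₁, sum_prodPi hη₂, mul_one,
          mul_one]
    _ ≤ ∑ y', |prodPi η₁ (ι ⊕ κ) (e (y, y')) - prodPi η₂ (ι ⊕ κ) (e (y, y'))| := by
        simp only [hsplit]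
        exact abs_sum_le_sum_abs _ _

theorem tvDist_prodPi_mono {η₁ η₂ : α → ℝ} (hη₁ : ∑ a, η₁ a = 1) (hη₂ : ∑ a, η₂ a = 1)
    (h : Fintype.card ι ≤ Fintype.card κ) :
    tvDist (prodPi η₁ ι) (prodPi η₂ ι) ≤ tvDist (prodPi η₁ κ) (prodPi η₂ κ) := by
  let e : Fin (Fintype.card ι) ⊕ Fin (Fintype.card κ - Fintype.card ι) ≃ κ :=
    finSumFinEquiv.trans ((finCongr (Nat.add_sub_cancel' h)).trans (Fintype.equivFin κ).symm)
  rw [tvDist_prodPi_congr (Fintype.equivFin ι), ← tvDist_prodPi_congr e]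
  exact tvDist_prodPi_le_sum hη₁ hη₂

theorem sum_comp_restrict (S : Finset ι) (F : (S → α) → ℝ) :
    ∑ z : ι → α, F (S.restrict z) = (Fintype.card α : ℝ) ^ (Fintype.card ι - #S) * ∑ y, F y := by
  let e := (Equiv.piEquivPiSubtypeProd (· ∈ S) fun _ => α).symm
  have hrestrict : ∀ y z, S.restrict (e (y, z)) = y := fun y z => by
    funext s
    simp [e, Finset.restrict, Equiv.piEquivPiSubtypeProd_symm_apply, s.2]
  rw [← e.sum_comp, Fintype.sum_prod_type, sum_comm]
  simp only [hrestrict, sum_const, nsmul_eq_mul, card_univ, Fintype.card_fun,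
    Fintype.card_subtype_compl, Fintype.card_coe]
  push_cast
  ring

theorem sum_prod_finset (S : Finset ι) {η : α → ℝ} (hη : ∑ a, η a = 1) :
    ∑ z : ι → α, ∏ i ∈ S, η (z i) = (Fintype.card α : ℝ) ^ (Fintype.card ι - #S) := by
  simp only [← prodPi_restrict, sum_comp_restrict, sum_prodPi hη, mul_one]

theorem sum_abs_prod_finset_sub (S : Finset ι) (η₁ η₂ : α → ℝ) :
    ∑ z : ι → α, |∏ i ∈ S, η₁ (z i) - ∏ i ∈ S, η₂ (z i)| =
      (Fintype.card α : ℝ) ^ (Fintype.card ι - #S) * (2 * tvDist (prodPi η₁ S) (prodPi η₂ S)) := by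
  simp only [← prodPi_restrict, sum_comp_restrict S fun y => |prodPi η₁ S y - prodPi η₂ S y|,
    tvDist]
  ring

end ProductDistribution

section Conditioning

variable {d m : ℕ} {ps : ℝ}

/-- `condP` decides `E` classically; this form accepts any instance. -/
theorem condP_eq_filter (η : Fin d → ℝ) (E : (Fin m → Fin (d + 1)) → Prop) [DecidablePred E] :
    condP ps η E = fun x => (if E x then trajP (MG d ps η) (pInit d ps) x else 0) /
      ∑ y ∈ univ.filter E, trajP (MG d ps η) (pInit d ps) y := by
  rw [sum_filter]
  unfold condP
  convert rfl

theorem tvDist_condP_le {c : ℝ} {η₁ η₂ : Fin d → ℝ} {E : (Fin m → Fin (d + 1)) → Prop}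
    [DecidablePred E] (hc : 0 ≤ c)
    (hmass : ∑ x ∈ univ.filter E, trajP (MG d ps η₁) (pInit d ps) x =
      ∑ x ∈ univ.filter E, trajP (MG d ps η₂) (pInit d ps) x)
    (hdiff : ∑ x ∈ univ.filter E,
        |trajP (MG d ps η₁) (pInit d ps) x - trajP (MG d ps η₂) (pInit d ps) x| ≤
      2 * c * ∑ x ∈ univ.filter E, trajP (MG d ps η₁) (pInit d ps) x) :
    tvDist (condP ps η₁ E) (condP ps η₂ E) ≤ c := by
  rw [condP_eq_filter, condP_eq_filter, ← hmass]
  refine tvDist_div_le hc ?_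
  have hite : ∀ x, |(if E x then trajP (MG d ps η₁) (pInit d ps) x else 0) -
      (if E x then trajP (MG d ps η₂) (pInit d ps) x else 0)| =
      if E x then |trajP (MG d ps η₁) (pInit d ps) x - trajP (MG d ps η₂) (pInit d ps) x|
      else 0 := fun x => by split_ifs <;> simp
  rw [tvDist, sum_congr rfl fun x _ => hite x, ← sum_filter]
  linarith

end Conditioning

section Chain

theorem trajP_succ {d k : ℕ} (M : Matrix (Fin d) (Fin d) ℝ) (μ : Fin d → ℝ)
    (x : Fin (k + 1) → Fin d) :
    trajP M μ x = μ (x 0) * ∏ t : Fin k, M (x t.castSucc) (x t.succ) := rfl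

theorem trajP_of_length_zero {d : ℕ} (M : Matrix (Fin d) (Fin d) ℝ) (μ : Fin d → ℝ)
    (x : Fin 0 → Fin d) : trajP M μ x = 1 := by
  simp [trajP]

theorem trajP_nonneg {d m : ℕ} {M : Matrix (Fin d) (Fin d) ℝ} {μ : Fin d → ℝ}
    (hM : ∀ i j, 0 ≤ M i j) (hμ : ∀ i, 0 ≤ μ i) (x : Fin m → Fin d) : 0 ≤ trajP M μ x := by
  unfold trajP
  refine mul_nonneg ?_ (prod_nonneg fun t _ => hM _ _)
  split_ifs
  exacts [hμ _, zero_le_one]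

variable {d : ℕ} {ps : ℝ}

theorem pInit_nonneg (hps0 : 0 ≤ ps) (hps1 : ps ≤ 1) (i : Fin (d + 1)) : 0 ≤ pInit d ps i := by
  unfold pInit
  split_ifs
  exacts [hps0, div_nonneg (by linarith) d.cast_nonneg]

theorem MG_last_castSucc (η : Fin d → ℝ) (j : Fin d) :
    MG d ps η (Fin.last d) j.castSucc = η j := by
  simp [MG, j.isLt.ne]

theorem MG_last_last (η : Fin d → ℝ) : MG d ps η (Fin.last d) (Fin.last d) = 0 := by
  simp [MG]

theorem MG_of_ne_last (η : Fin d → ℝ) {i : Fin (d + 1)} (hi : i ≠ Fin.last d) (j : Fin (d + 1)) :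
    MG d ps η i j = pInit d ps j := by
  have : (i : ℕ) ≠ d := fun h => hi (Fin.ext h)
  simp [MG, this]

theorem MG_nonneg (hps0 : 0 ≤ ps) (hps1 : ps ≤ 1) {η : Fin d → ℝ} (hη : ∀ i, 0 ≤ η i)
    (i j : Fin (d + 1)) : 0 ≤ MG d ps η i j := by
  simp only [MG, Matrix.of_apply]
  split_ifs
  exacts [le_rfl, hη _, pInit_nonneg hps0 hps1 j]

end Chain

section Trajectory

variable {d k : ℕ} {ps : ℝ}

def afterLast (x : Fin (k + 1) → Fin (d + 1)) : Finset (Fin (k + 1)) :=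
  (univ.filter fun t : Fin k => x t.castSucc = Fin.last d).map (Fin.succEmb k)

def NoRepeatLast (x : Fin (k + 1) → Fin (d + 1)) : Prop :=
  ∀ s ∈ afterLast x, x s ≠ Fin.last d

def fillAfterLast (x : Fin (k + 1) → Fin (d + 1)) (z : Fin (k + 1) → Fin d) :
    Fin (k + 1) → Fin (d + 1) :=
  fun s => if s ∈ afterLast x then (z s).castSucc else x s

/-- Swaps the values of `x` and `z` on `afterLast x`; the `dite` only guards `castPred`. -/
def exchangeAfterLast (p : (Fin (k + 1) → Fin (d + 1)) × (Fin (k + 1) → Fin d)) :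
    (Fin (k + 1) → Fin (d + 1)) × (Fin (k + 1) → Fin d) :=
  (fillAfterLast p.1 p.2, fun s =>
    if h : s ∈ afterLast p.1 ∧ p.1 s ≠ Fin.last d then (p.1 s).castPred h.2 else p.2 s)

open scoped Classical in
def admissible (d k n : ℕ) : Finset (Fin (k + 1) → Fin (d + 1)) :=
  univ.filter fun x => NoRepeatLast x ∧ Nlast d (k + 1) x = n

variable {x : Fin (k + 1) → Fin (d + 1)}

theorem succ_mem_afterLast {t : Fin k} : t.succ ∈ afterLast x ↔ x t.castSucc = Fin.last d := by
  simp [afterLast]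

theorem zero_notMem_afterLast : (0 : Fin (k + 1)) ∉ afterLast x := by
  simp [afterLast, Fin.succ_ne_zero]

theorem afterLast_congr {y : Fin (k + 1) → Fin (d + 1)}
    (h : ∀ s, x s = Fin.last d ↔ y s = Fin.last d) : afterLast x = afterLast y := by
  simp only [afterLast, h]

theorem prod_afterLast (f : Fin (k + 1) → ℝ) :
    ∏ s ∈ afterLast x, f s = ∏ t : Fin k, if x t.castSucc = Fin.last d then f t.succ else 1 := by
  rw [afterLast, prod_map, prod_filter]
  rfl

theorem Nlast_eq_card (x : Fin (k + 1) → Fin (d + 1)) :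
    Nlast d (k + 1) x = #(univ.filter fun s => x s = Fin.last d) := by
  simp only [Nlast, Fin.ext_iff, Fin.val_last]

theorem card_afterLast_le : #(afterLast x) ≤ Nlast d (k + 1) x := by
  rw [afterLast, card_map, Nlast_eq_card]
  exact card_le_card_of_injOn Fin.castSucc (by simp [Set.MapsTo]) (Fin.castSucc_injective k).injOn

theorem mem_admissible {n : ℕ} : x ∈ admissible d k n ↔ NoRepeatLast x ∧ Nlast d (k + 1) x = n := by
  simp [admissible]

theorem fillAfterLast_apply_of_notMem {s : Fin (k + 1)} (hs : s ∉ afterLast x)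
    (z : Fin (k + 1) → Fin d) : fillAfterLast x z s = x s :=
  if_neg hs

theorem fillAfterLast_eq_last_iff (hx : NoRepeatLast x) (z : Fin (k + 1) → Fin d)
    (s : Fin (k + 1)) : fillAfterLast x z s = Fin.last d ↔ x s = Fin.last d := by
  unfold fillAfterLast
  split_ifs with hs
  · exact iff_of_false (Fin.castSucc_ne_last _) (hx s hs)
  · rfl

theorem afterLast_fillAfterLast (hx : NoRepeatLast x) (z : Fin (k + 1) → Fin d) :
    afterLast (fillAfterLast x z) = afterLast x :=
  afterLast_congr (fillAfterLast_eq_last_iff hx z)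

theorem noRepeatLast_fillAfterLast (hx : NoRepeatLast x) (z : Fin (k + 1) → Fin d) :
    NoRepeatLast (fillAfterLast x z) := by
  intro s hs
  rw [afterLast_fillAfterLast hx z] at hs
  simp [fillAfterLast, hs, Fin.castSucc_ne_last]

theorem Nlast_fillAfterLast (hx : NoRepeatLast x) (z : Fin (k + 1) → Fin d) :
    Nlast d (k + 1) (fillAfterLast x z) = Nlast d (k + 1) x := by
  simp only [Nlast_eq_card, fillAfterLast_eq_last_iff hx z]

theorem exchangeAfterLast_exchangeAfterLast (hx : NoRepeatLast x) (z : Fin (k + 1) → Fin d) :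
    exchangeAfterLast (exchangeAfterLast (x, z)) = (x, z) := by
  ext s : 2
  · simp only [exchangeAfterLast, fillAfterLast, afterLast_fillAfterLast hx z]
    split_ifs with hs h
    · exact Fin.castSucc_castPred _ _
    · exact absurd ⟨hs, hx s hs⟩ h
    · rfl
  · by_cases hs : s ∈ afterLast x
    · simp [exchangeAfterLast, afterLast_fillAfterLast hx z, fillAfterLast, hs]
    · simp [exchangeAfterLast, afterLast_fillAfterLast hx z, hs]

theorem trajP_eq_zero_of_not_noRepeatLast (η : Fin d → ℝ) (μ : Fin (d + 1) → ℝ)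
    (hx : ¬ NoRepeatLast x) : trajP (MG d ps η) μ x = 0 := by
  simp only [NoRepeatLast, not_forall, not_not, afterLast, mem_map, mem_filter] at hx
  obtain ⟨_, ⟨t, ⟨-, hlast⟩, rfl⟩, hlast'⟩ := hx
  rw [trajP_succ]
  refine mul_eq_zero_of_right _ (prod_eq_zero (mem_univ t) ?_)
  rw [hlast, show x t.succ = Fin.last d from hlast', MG_last_last]

/-- The `η`-free factor is the law under `M_𝟙`, whose row `d+1` is `1` away from `d+1`. -/
theorem trajP_fillAfterLast (η : Fin d → ℝ) (hx : NoRepeatLast x) (z : Fin (k + 1) → Fin d) :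
    trajP (MG d ps η) (pInit d ps) (fillAfterLast x z) =
      trajP (MG d ps 1) (pInit d ps) x * ∏ s ∈ afterLast x, η (z s) := by
  rw [trajP_succ, trajP_succ, fillAfterLast_apply_of_notMem zero_notMem_afterLast, prod_afterLast,
    mul_assoc, ← prod_mul_distrib]
  congr 1
  refine prod_congr rfl fun t _ => ?_
  by_cases hlast : x t.castSucc = Fin.last d
  · have hsucc : t.succ ∈ afterLast x := succ_mem_afterLast.mpr hlast
    have hfill : fillAfterLast x z t.castSucc = Fin.last d :=
      (fillAfterLast_eq_last_iff hx z _).mpr hlast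
    rw [hfill, hlast, if_pos rfl, fillAfterLast, if_pos hsucc, MG_last_castSucc,
      ← Fin.castSucc_castPred _ (hx _ hsucc), MG_last_castSucc, Pi.one_apply, one_mul]
  · have hsucc : t.succ ∉ afterLast x := fun h => hlast (succ_mem_afterLast.mp h)
    have hfill : fillAfterLast x z t.castSucc ≠ Fin.last d :=
      fun h => hlast ((fillAfterLast_eq_last_iff hx z _).mp h)
    rw [if_neg hlast, mul_one, fillAfterLast_apply_of_notMem hsucc, MG_of_ne_last _ hfill,
      MG_of_ne_last _ hlast]

theorem sum_trajP_fillAfterLast {η : Fin d → ℝ} (hη : ∑ i, η i = 1) (hx : NoRepeatLast x) :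
    ∑ z, trajP (MG d ps η) (pInit d ps) (fillAfterLast x z) =
      trajP (MG d ps 1) (pInit d ps) x * (d : ℝ) ^ (k + 1 - #(afterLast x)) := by
  simp only [trajP_fillAfterLast η hx, ← mul_sum, sum_prod_finset _ hη, Fintype.card_fin]

theorem sum_abs_sub_trajP_fillAfterLast_le (hps0 : 0 ≤ ps) (hps1 : ps ≤ 1) {η₁ η₂ : Fin d → ℝ}
    (hη₁ : ∑ i, η₁ i = 1) (hη₂ : ∑ i, η₂ i = 1) (hx : NoRepeatLast x) {n : ℕ}
    (hn : #(afterLast x) ≤ n) :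
    ∑ z, |trajP (MG d ps η₁) (pInit d ps) (fillAfterLast x z) -
        trajP (MG d ps η₂) (pInit d ps) (fillAfterLast x z)| ≤
      2 * tvDist (prodP η₁ n) (prodP η₂ n) *
        (trajP (MG d ps 1) (pInit d ps) x * (d : ℝ) ^ (k + 1 - #(afterLast x))) := by
  have hA : 0 ≤ trajP (MG d ps 1) (pInit d ps) x :=
    trajP_nonneg (MG_nonneg hps0 hps1 fun _ => zero_le_one) (pInit_nonneg hps0 hps1) x
  have hmono : tvDist (prodPi η₁ (afterLast x)) (prodPi η₂ (afterLast x)) ≤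
      tvDist (prodP η₁ n) (prodP η₂ n) :=
    tvDist_prodPi_mono hη₁ hη₂ (by simpa using hn)
  simp only [trajP_fillAfterLast _ hx, ← mul_sub, abs_mul, abs_of_nonneg hA, ← mul_sum,
    sum_abs_prod_finset_sub, Fintype.card_fin]
  calc _ ≤ trajP (MG d ps 1) (pInit d ps) x *
        ((d : ℝ) ^ (k + 1 - #(afterLast x)) * (2 * tvDist (prodP η₁ n) (prodP η₂ n))) := by
        gcongr
    _ = _ := by ring

theorem sum_sum_fillAfterLast (n : ℕ) (G : (Fin (k + 1) → Fin (d + 1)) → ℝ) :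
    ∑ x ∈ admissible d k n, ∑ z, G (fillAfterLast x z) =
      (d : ℝ) ^ (k + 1) * ∑ x ∈ admissible d k n, G x := by
  have hmaps : ∀ p ∈ admissible d k n ×ˢ univ, exchangeAfterLast p ∈ admissible d k n ×ˢ univ := by
    simp only [mem_product, mem_univ, and_true, mem_admissible, exchangeAfterLast]
    exact fun p ⟨hp, hn⟩ =>
      ⟨noRepeatLast_fillAfterLast hp p.2, (Nlast_fillAfterLast hp p.2).trans hn⟩
  have hinv : ∀ p ∈ admissible d k n ×ˢ univ, exchangeAfterLast (exchangeAfterLast p) = p :=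
    fun p hp => exchangeAfterLast_exchangeAfterLast (mem_admissible.mp (mem_product.mp hp).1).1 p.2
  calc ∑ x ∈ admissible d k n, ∑ z, G (fillAfterLast x z)
      = ∑ p ∈ admissible d k n ×ˢ univ, G (exchangeAfterLast p).1 := (sum_product' _ _ _).symm
    _ = ∑ p ∈ admissible d k n ×ˢ univ, G p.1 :=
        (sum_nbij' exchangeAfterLast exchangeAfterLast hmaps hmaps hinv hinv fun p hp => by
          rw [hinv p hp]).symm
    _ = _ := by simp [sum_product, mul_sum]

theorem sum_Nlast_eq_sum_fillAfterLast (hd : d ≠ 0) (n : ℕ) {G : (Fin (k + 1) → Fin (d + 1)) → ℝ}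
    (hG : ∀ x, ¬ NoRepeatLast x → G x = 0) :
    ∑ x ∈ univ.filter (Nlast d (k + 1) · = n), G x =
      ((d : ℝ) ^ (k + 1))⁻¹ * ∑ x ∈ admissible d k n, ∑ z, G (fillAfterLast x z) := by
  rw [sum_sum_fillAfterLast, inv_mul_cancel_left₀ (by positivity)]
  refine (sum_subset (fun x hx => ?_) fun x _ hx => hG x fun h => hx ?_).symm
  · simpa using (mem_admissible.mp hx).2
  · simp_all [mem_admissible]

theorem sum_Nlast_trajP (hd : d ≠ 0) {η : Fin d → ℝ} (hη : ∑ i, η i = 1) (n : ℕ) :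
    ∑ x ∈ univ.filter (Nlast d (k + 1) · = n), trajP (MG d ps η) (pInit d ps) x =
      ((d : ℝ) ^ (k + 1))⁻¹ * ∑ x ∈ admissible d k n,
        trajP (MG d ps 1) (pInit d ps) x * (d : ℝ) ^ (k + 1 - #(afterLast x)) := by
  rw [sum_Nlast_eq_sum_fillAfterLast hd n fun x hx => trajP_eq_zero_of_not_noRepeatLast η _ hx]
  congr 1
  exact sum_congr rfl fun x hx => sum_trajP_fillAfterLast hη (mem_admissible.mp hx).1

theorem sum_Nlast_abs_sub_trajP_le (hd : d ≠ 0) (hps0 : 0 ≤ ps) (hps1 : ps ≤ 1)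
    {η₁ η₂ : Fin d → ℝ} (hη₁ : ∑ i, η₁ i = 1) (hη₂ : ∑ i, η₂ i = 1) (n : ℕ) :
    ∑ x ∈ univ.filter (Nlast d (k + 1) · = n),
        |trajP (MG d ps η₁) (pInit d ps) x - trajP (MG d ps η₂) (pInit d ps) x| ≤
      2 * tvDist (prodP η₁ n) (prodP η₂ n) *
        ∑ x ∈ univ.filter (Nlast d (k + 1) · = n), trajP (MG d ps η₁) (pInit d ps) x := by
  rw [sum_Nlast_trajP hd hη₁, sum_Nlast_eq_sum_fillAfterLast hd n fun x hx => by
    simp [trajP_eq_zero_of_not_noRepeatLast _ _ hx], mul_left_comm]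
  gcongr
  rw [mul_sum]
  gcongr with x hx
  obtain ⟨hgood, rfl⟩ := mem_admissible.mp hx
  exact sum_abs_sub_trajP_fillAfterLast_le hps0 hps1 hη₁ hη₂ hgood card_afterLast_le

end Trajectory

theorem tv_cond_eq_le_tv_product_general
    (d m : ℕ) (hd : 2 ≤ d) (ps : ℝ) (hps : 0 < ps) (hps2 : ps ≤ 1 / (2 * ((d : ℝ) + 1)))
    (η₁ η₂ : Fin d → ℝ) (h1 : IsDist η₁) (h2 : IsDist η₂)
    (n : ℕ) :
    tvDist (condP (m := m) ps η₁ (fun x => Nlast d m x = n))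
        (condP (m := m) ps η₂ (fun x => Nlast d m x = n)) ≤
      tvDist (prodP η₁ n) (prodP η₂ n) := by
  rcases m with _ | k
  · have hfree : condP ps η₁ (fun x : Fin 0 → Fin (d + 1) => Nlast d 0 x = n) =
        condP ps η₂ (fun x => Nlast d 0 x = n) := by
      unfold condP
      simp only [trajP_of_length_zero]
    rw [hfree, tvDist_self]
    exact tvDist_nonneg _ _
  have hd0 : d ≠ 0 := by omega
  have hps1 : ps ≤ 1 := hps2.trans <| (div_le_one (by positivity)).mpr (by linarith)
  refine tvDist_condP_le (tvDist_nonneg _ _) ?_ ?_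
  · exact (sum_Nlast_trajP hd0 h1.2 n).trans (sum_Nlast_trajP hd0 h2.2 n).symm
  · exact sum_Nlast_abs_sub_trajP_le hd0 hps.le hps1 h1.2 h2.2 n

/-- Decoupling: the TV distance between the conditional trajectory laws given
`N_{d+1} = n` is at most the TV distance between the product distributions
`η₁^{⊗n}` and `η₂^{⊗n}`. -/
theorem tv_cond_eq_le_tv_product
    (d m : ℕ) (hd : 2 ≤ d) (ps : ℝ) (hps : 0 < ps) (hps2 : ps ≤ 1 / (2 * ((d : ℝ) + 1)))
    (η₁ η₂ : Fin d → ℝ) (h1 : IsDist η₁) (h2 : IsDist η₂)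
    (n : ℕ) (hn1 : 1 ≤ n) (hn2 : 2 * n ≤ m + 1) :
    tvDist (condP (m := m) ps η₁ (fun x => Nlast d m x = n))
        (condP (m := m) ps η₂ (fun x => Nlast d m x = n)) ≤
      tvDist (prodP η₁ n) (prodP η₂ n) :=
  tv_cond_eq_le_tv_product_general d m hd ps hps hps2 η₁ η₂ h1 h2 n

end
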